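/- arXiv:1710.01388 — 2 statements merged into one kernel-verified Lean document; each statement's English description precedes it below -/
import Mathlib

section
/- Let f be holomorphic on the strip {s : |Re s| ≤ σ} (σ > 0) with sufficient decay in |Im s|, let g(s) = (s² - a²)(s² - b²)/(a²b²) with a,b nonzero complex numbers satisfying |Re a|, |Re b| < σ, and suppose f satisfies f(-s) = f(s) for all s. Then (1/2πi)∫_{(σ)} g(s) f(s) ds/s = f(0)/2, where the integral is over the vertical line Re s = σ. -/
/-!
With `φ s = g s * f s` the integrand is `φ s / s`, where `φ` is even, holomorphic on the strip
and `O((1 + (Im s)²)⁻¹)` there. Split `φ s / s = dslope φ 0 s + φ 0 / s`. The first term is odd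
and holomorphic, so Cauchy's theorem on the rectangle `[-σ, σ] × [-T, T]`, folded by `s ↦ -s`,
identifies its integral along the right side with the one along the top side, which tends to `0`.
The second term gives `φ 0 * ∫_{-T}^{T} (σ + iy)⁻¹ dy = 2 φ 0 arctan (T / σ) → π φ 0`,
and `φ 0 = f 0` because `g 0 = 1`.
-/

open Complex MeasureTheory Filter Set Topology

theorem Function.Even.odd_dslope {𝕜 E : Type*} [NontriviallyNormedField 𝕜] [NormedAddCommGroup E]
    [NormedSpace 𝕜 E] {φ : 𝕜 → E} (hφ : φ.Even) : (dslope φ 0).Odd := by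
  intro s
  rcases eq_or_ne s 0 with rfl | hs
  · have hderiv : deriv φ 0 = -deriv φ 0 := by
      simpa [funext hφ] using deriv_comp_neg (f := φ) (x := (0 : 𝕜))
    simpa [dslope_same] using hderiv
  · rw [dslope_of_ne _ hs, dslope_of_ne _ (neg_ne_zero.2 hs), slope_def_module,
      slope_def_module, hφ s]
    simp [inv_neg]

theorem integral_vertical_eq_integral_horizontal_of_odd {E : Type*} [NormedAddCommGroup E]
    [NormedSpace ℂ E] [CompleteSpace E] {ψ : ℂ → E} {σ : ℝ} (hσ : 0 ≤ σ) (hψ : ψ.Odd)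
    (hc : ContinuousOn ψ {s | |s.re| ≤ σ}) (hd : DifferentiableOn ℂ ψ {s | |s.re| < σ}) (T : ℝ) :
    I • ∫ y in -T..T, ψ (σ + y * I) = ∫ x in -σ..σ, ψ (x + T * I) := by
  have hrect := integral_boundary_rect_eq_zero_of_continuousOn_of_differentiableOn ψ
    ⟨-σ, -T⟩ ⟨σ, T⟩
    (hc.mono fun s hs => by
      have := hs.1; rw [mem_preimage, uIcc_of_le (by linarith)] at this; exact abs_le.2 this)
    (hd.mono fun s hs => by
      have := hs.1; rw [mem_preimage, min_eq_left (by linarith), max_eq_right (by linarith)] at this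
      exact abs_lt.2 this)
  have hbottom : ∫ x in -σ..σ, ψ (x + (-T : ℝ) * I) = -∫ x in -σ..σ, ψ (x + T * I) := by
    have h := intervalIntegral.integral_comp_neg (a := -σ) (b := σ) fun x : ℝ => ψ (x + T * I)
    rw [neg_neg] at h
    rw [← h, ← intervalIntegral.integral_neg]
    refine intervalIntegral.integral_congr fun x _ => ?_
    rw [← hψ]; push_cast; ring_nf
  have hleft : ∫ y in -T..T, ψ ((-σ : ℝ) + y * I) = -∫ y in -T..T, ψ (σ + y * I) := by
    have h := intervalIntegral.integral_comp_neg (a := -T) (b := T) fun y : ℝ => ψ (σ + y * I)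
    rw [neg_neg] at h
    rw [← h, ← intervalIntegral.integral_neg]
    refine intervalIntegral.integral_congr fun y _ => ?_
    rw [← hψ]; push_cast; ring_nf
  simp only [hbottom, hleft] at hrect
  linear_combination (norm := module) (2⁻¹ : ℂ) • hrect

theorem norm_dslope_zero_le {E : Type*} [NormedAddCommGroup E] [NormedSpace ℂ E] {φ : ℂ → E}
    {M : ℝ} {s : ℂ} (hs : s ≠ 0) (hMs : ‖φ s‖ ≤ M) (hM0 : ‖φ 0‖ ≤ M) :
    ‖dslope φ 0 s‖ ≤ 2 * M / ‖s‖ := by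
  rw [dslope_of_ne _ hs, slope_def_module, sub_zero, norm_smul, norm_inv, inv_mul_eq_div]
  gcongr
  linarith [norm_sub_le (φ s) (φ 0)]

theorem tendsto_integral_dslope_horizontal {E : Type*} [NormedAddCommGroup E] [NormedSpace ℂ E]
    {φ : ℂ → E} {σ M : ℝ} (hσ : 0 ≤ σ) (hM : ∀ s : ℂ, |s.re| ≤ σ → ‖φ s‖ ≤ M) :
    Tendsto (fun T : ℝ => ∫ x in -σ..σ, dslope φ 0 (x + T * I)) atTop (𝓝 0) := by
  have hbound : Tendsto (fun T : ℝ => 2 * M / T * |σ - -σ|) atTop (𝓝 0) := by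
    simpa using (tendsto_const_nhds.div_atTop tendsto_id).mul_const |σ - -σ|
  refine squeeze_zero_norm' ?_ hbound
  filter_upwards [eventually_gt_atTop 0] with T hT
  refine intervalIntegral.norm_integral_le_of_norm_le_const fun x hx => ?_
  have hx : |x| ≤ σ := by
    rw [uIoc_of_le (by linarith)] at hx
    exact abs_le.2 ⟨hx.1.le, hx.2⟩
  have hs : (x : ℂ) + T * I ≠ 0 := fun h => by simpa [hT.ne'] using congrArg im h
  have hT_le : T ≤ ‖(x : ℂ) + T * I‖ := by
    simpa [abs_of_pos hT] using abs_im_le_norm ((x : ℂ) + T * I)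
  have hφ0 : ‖φ 0‖ ≤ M := hM 0 (by simpa using hσ)
  have hM0 : 0 ≤ M := (norm_nonneg _).trans hφ0
  calc ‖dslope φ 0 (x + T * I)‖ ≤ 2 * M / ‖(x : ℂ) + T * I‖ :=
        norm_dslope_zero_le hs (hM _ (by simpa using hx)) hφ0
    _ ≤ 2 * M / T := by gcongr

theorem integral_inv_vertical {σ : ℝ} (hσ : σ ≠ 0) (T : ℝ) :
    ∫ y in -T..T, ((σ : ℂ) + y * I)⁻¹ = ((2 * Real.arctan (T / σ) : ℝ) : ℂ) := by
  have hne : ∀ y : ℝ, (σ : ℂ) + y * I ≠ 0 := fun y h => hσ (by simpa using congrArg re h)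
  have hcont : Continuous fun y : ℝ => ((σ : ℂ) + y * I)⁻¹ :=
    (by fun_prop : Continuous fun y : ℝ => (σ : ℂ) + y * I).inv₀ hne
  have hneg : ∫ y in -T..T, ((σ : ℂ) + (-y : ℝ) * I)⁻¹ = ∫ y in -T..T, ((σ : ℂ) + y * I)⁻¹ := by
    simpa using intervalIntegral.integral_comp_neg (a := -T) (b := T)
      fun y : ℝ => ((σ : ℂ) + y * I)⁻¹
  have hsum : ∀ y : ℝ, ((σ : ℂ) + y * I)⁻¹ + ((σ : ℂ) + (-y : ℝ) * I)⁻¹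
      = ((2 * (σ / (σ ^ 2 + y ^ 2)) : ℝ) : ℂ) := by
    intro y
    have hprod : ((σ : ℂ) + y * I) * ((σ : ℂ) + (-y : ℝ) * I) = σ ^ 2 + y ^ 2 := by
      push_cast; ring_nf; rw [I_sq]; ring
    rw [inv_add_inv (hne y) (hne (-y)), hprod]
    push_cast
    ring
  calc ∫ y in -T..T, ((σ : ℂ) + y * I)⁻¹
      = 2⁻¹ * ((∫ y in -T..T, ((σ : ℂ) + y * I)⁻¹)
          + ∫ y in -T..T, ((σ : ℂ) + (-y : ℝ) * I)⁻¹) := by rw [hneg]; ring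
    _ = 2⁻¹ * ∫ y in -T..T, (((2 * (σ / (σ ^ 2 + y ^ 2)) : ℝ) : ℂ)) := by
      have hcont' : Continuous fun y : ℝ => ((σ : ℂ) + (-y : ℝ) * I)⁻¹ :=
        hcont.comp continuous_neg
      rw [← intervalIntegral.integral_add (hcont.intervalIntegrable _ _)
        (hcont'.intervalIntegrable _ _)]
      simp only [hsum]
    _ = ((2 * Real.arctan (T / σ) : ℝ) : ℂ) := by
      rw [intervalIntegral.integral_ofReal, intervalIntegral.integral_const_mul,
        integral_div_sq_add_sq, neg_div, Real.arctan_neg]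
      push_cast
      ring

theorem tendsto_integral_inv_vertical {σ : ℝ} (hσ : 0 < σ) :
    Tendsto (fun T : ℝ => ∫ y in -T..T, ((σ : ℂ) + y * I)⁻¹) atTop (𝓝 Real.pi) := by
  simp only [integral_inv_vertical hσ.ne']
  have harctan : Tendsto (fun T : ℝ => 2 * Real.arctan (T / σ)) atTop (𝓝 (2 * (Real.pi / 2))) :=
    ((tendsto_nhds_of_tendsto_nhdsWithin Real.tendsto_arctan_atTop).comp
      (tendsto_id.atTop_div_const hσ)).const_mul 2
  rw [mul_div_cancel₀ _ two_ne_zero] at harctan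
  exact (continuous_ofReal.tendsto _).comp harctan

theorem integral_vertical_div_of_even {σ : ℝ} (hσ : 0 < σ) {φ : ℂ → ℂ}
    (hφ : DifferentiableOn ℂ φ {s | |s.re| ≤ σ}) (heven : φ.Even) {M : ℝ}
    (hM : ∀ s : ℂ, |s.re| ≤ σ → ‖φ s‖ ≤ M)
    (hint : Integrable fun t : ℝ => φ (σ + t * I) / (σ + t * I) * I) :
    ∫ t : ℝ, φ (σ + t * I) / (σ + t * I) * I = Real.pi * I * φ 0 := by
  have hopen : {s : ℂ | |s.re| < σ} ∈ 𝓝 0 :=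
    (isOpen_lt (by fun_prop) continuous_const).mem_nhds (by simpa using hσ)
  have hclosed : {s : ℂ | |s.re| ≤ σ} ∈ 𝓝 0 :=
    mem_of_superset hopen fun s (hs : |s.re| < σ) => hs.le
  have hcont : ContinuousOn (dslope φ 0) {s | |s.re| ≤ σ} :=
    (continuousOn_dslope hclosed).2 ⟨hφ.continuousOn, hφ.differentiableAt hclosed⟩
  have hdiff : DifferentiableOn ℂ (dslope φ 0) {s | |s.re| < σ} :=
    (differentiableOn_dslope hopen).2 (hφ.mono fun s (hs : |s.re| < σ) => hs.le)
  have hne : ∀ y : ℝ, (σ : ℂ) + y * I ≠ 0 := fun y h => hσ.ne' (by simpa using congrArg re h)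
  have hline : Continuous fun y : ℝ => dslope φ 0 (σ + y * I) :=
    hcont.comp_continuous (by fun_prop) fun y => by simp [abs_of_pos hσ]
  have hinvline : Continuous fun y : ℝ => ((σ : ℂ) + y * I)⁻¹ :=
    (by fun_prop : Continuous fun y : ℝ => (σ : ℂ) + y * I).inv₀ hne
  have hsplit : ∀ T : ℝ, ∫ y in -T..T, φ (σ + y * I) / (σ + y * I) * I
      = I • (∫ y in -T..T, dslope φ 0 (σ + y * I))
        + φ 0 * I * ∫ y in -T..T, ((σ : ℂ) + y * I)⁻¹ := by
    intro T
    have hpoint : ∀ y : ℝ, φ (σ + y * I) / (σ + y * I) * I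
        = I * dslope φ 0 (σ + y * I) + φ 0 * I * ((σ : ℂ) + y * I)⁻¹ := by
      intro y
      rw [dslope_of_ne _ (hne y), slope_def_field, sub_zero]
      field_simp [hne y]
      ring
    simp only [hpoint]
    rw [intervalIntegral.integral_add ((hline.intervalIntegrable _ _).const_mul _)
      ((hinvline.intervalIntegrable _ _).const_mul _), intervalIntegral.integral_const_mul,
      intervalIntegral.integral_const_mul, smul_eq_mul]
  have hlim : Tendsto (fun T : ℝ => ∫ y in -T..T, φ (σ + y * I) / (σ + y * I) * I) atTop
      (𝓝 (0 + φ 0 * I * Real.pi)) := by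
    simp only [hsplit,
      integral_vertical_eq_integral_horizontal_of_odd hσ.le heven.odd_dslope hcont hdiff]
    exact (tendsto_integral_dslope_horizontal hσ.le hM).add
      ((tendsto_integral_inv_vertical hσ).const_mul _)
  rw [tendsto_nhds_unique (intervalIntegral_tendsto_integral hint tendsto_neg_atTop_atBot
    tendsto_id) hlim]
  ring

theorem integrable_vertical_div_of_norm_le {σ K : ℝ} (hσ : 0 < σ) {φ : ℂ → ℂ}
    (hφ : ContinuousOn φ {s | |s.re| ≤ σ})
    (hK : ∀ s : ℂ, |s.re| ≤ σ → ‖φ s‖ ≤ K * (1 + s.im ^ 2)⁻¹) :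
    Integrable fun t : ℝ => φ (σ + t * I) / (σ + t * I) * I := by
  have hline : ∀ t : ℝ, |((σ : ℂ) + t * I).re| ≤ σ := fun t => by simp [abs_of_pos hσ]
  have hcont : Continuous fun t : ℝ => φ (σ + t * I) / (σ + t * I) * I := by
    refine ((hφ.comp_continuous (by fun_prop) hline).div (by fun_prop) fun t h => ?_).mul
      continuous_const
    exact hσ.ne' (by simpa using congrArg re h)
  refine (integrable_inv_one_add_sq.const_mul (K / σ)).mono' hcont.aestronglyMeasurable
    (Eventually.of_forall fun t => ?_)
  have hσle : σ ≤ ‖(σ : ℂ) + t * I‖ := by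
    simpa [abs_of_pos hσ] using abs_re_le_norm ((σ : ℂ) + t * I)
  have hφt : ‖φ (σ + t * I)‖ ≤ K * (1 + t ^ 2)⁻¹ := by simpa using hK _ (hline t)
  rw [norm_mul, norm_I, mul_one, norm_div, div_mul_eq_mul_div]
  exact div_le_div₀ ((norm_nonneg _).trans hφt) hφt hσ hσle

theorem integral_vertical_div_of_even_of_norm_le {σ K : ℝ} (hσ : 0 < σ) {φ : ℂ → ℂ}
    (hφ : DifferentiableOn ℂ φ {s | |s.re| ≤ σ}) (heven : φ.Even)
    (hK : ∀ s : ℂ, |s.re| ≤ σ → ‖φ s‖ ≤ K * (1 + s.im ^ 2)⁻¹) :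
    ∫ t : ℝ, φ (σ + t * I) / (σ + t * I) * I = Real.pi * I * φ 0 := by
  have hK0 : 0 ≤ K := by simpa using (norm_nonneg _).trans (hK 0 (by simpa using hσ.le))
  refine integral_vertical_div_of_even hσ hφ heven (M := K) (fun s hs => (hK s hs).trans ?_)
    (integrable_vertical_div_of_norm_le hσ hφ.continuousOn hK)
  exact mul_le_of_le_one_right hK0 (inv_le_one_of_one_le₀ (by nlinarith [sq_nonneg s.im]))

theorem one_add_abs_pow_le (n : ℕ) (t : ℝ) : (1 + |t|) ^ n ≤ n ^ n * Real.exp |t| := by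
  rcases n.eq_zero_or_pos with rfl | hn
  · simp
  have hn' : (0 : ℝ) < n := by exact_mod_cast hn
  calc (1 + |t|) ^ n ≤ (n * (|t| / n + 1)) ^ n := by
        gcongr
        rw [mul_add, mul_div_cancel₀ _ hn'.ne', mul_one]
        linarith [show (1 : ℝ) ≤ n by exact_mod_cast hn]
    _ = n ^ n * (|t| / n + 1) ^ n := mul_pow _ _ _
    _ ≤ n ^ n * Real.exp (|t| / n) ^ n := by gcongr; exact Real.add_one_le_exp _
    _ = n ^ n * Real.exp |t| := by rw [← Real.exp_nat_mul, mul_div_cancel₀ _ hn'.ne']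

theorem one_add_abs_pow_four_mul_exp_neg_le (t : ℝ) :
    (1 + |t|) ^ 4 * Real.exp (-|t|) ≤ 6 ^ 6 * (1 + t ^ 2)⁻¹ := by
  have h6 := one_add_abs_pow_le 6 t
  have hsq : 1 + t ^ 2 ≤ (1 + |t|) ^ 2 := by nlinarith [sq_abs t, abs_nonneg t]
  rw [Real.exp_neg, ← div_eq_mul_inv, ← div_eq_mul_inv, div_le_div_iff₀ (Real.exp_pos _)
    (by positivity)]
  push_cast at h6
  calc (1 + |t|) ^ 4 * (1 + t ^ 2) ≤ (1 + |t|) ^ 4 * (1 + |t|) ^ 2 := by gcongr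
    _ = (1 + |t|) ^ 6 := by ring
    _ ≤ 6 ^ 6 * Real.exp |t| := h6

theorem norm_sq_sub_sq_le {σ : ℝ} {s : ℂ} (hs : |s.re| ≤ σ) (a : ℂ) :
    ‖s ^ 2 - a ^ 2‖ ≤ ((σ + 1) ^ 2 + ‖a‖ ^ 2) * (1 + |s.im|) ^ 2 := by
  have hσ : 0 ≤ σ := (abs_nonneg _).trans hs
  have hs' : ‖s‖ ≤ (σ + 1) * (1 + |s.im|) :=
    (norm_le_abs_re_add_abs_im s).trans (by nlinarith [abs_nonneg s.im])
  have hone : 1 ≤ (1 + |s.im|) ^ 2 := one_le_pow₀ (by linarith [abs_nonneg s.im])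
  calc ‖s ^ 2 - a ^ 2‖ ≤ ‖s‖ ^ 2 + ‖a‖ ^ 2 :=
        (norm_sub_le _ _).trans_eq (by rw [norm_pow, norm_pow])
    _ ≤ ((σ + 1) * (1 + |s.im|)) ^ 2 + ‖a‖ ^ 2 * (1 + |s.im|) ^ 2 := by
      gcongr
      exact le_mul_of_one_le_right (by positivity) hone
    _ = _ := by ring

theorem norm_quartic_mul_le {σ C : ℝ} (a b : ℂ) {s w : ℂ} (hs : |s.re| ≤ σ)
    (hw : ‖w‖ ≤ C * Real.exp (-|s.im|)) :
    ‖(s ^ 2 - a ^ 2) * (s ^ 2 - b ^ 2) / (a ^ 2 * b ^ 2) * w‖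
      ≤ ((σ + 1) ^ 2 + ‖a‖ ^ 2) * ((σ + 1) ^ 2 + ‖b‖ ^ 2) / ‖a ^ 2 * b ^ 2‖ * C * 6 ^ 6
        * (1 + s.im ^ 2)⁻¹ := by
  have hC : 0 ≤ C := nonneg_of_mul_nonneg_left ((norm_nonneg w).trans hw) (Real.exp_pos _)
  rw [norm_mul, norm_div, norm_mul]
  calc ‖s ^ 2 - a ^ 2‖ * ‖s ^ 2 - b ^ 2‖ / ‖a ^ 2 * b ^ 2‖ * ‖w‖
      ≤ ((σ + 1) ^ 2 + ‖a‖ ^ 2) * (1 + |s.im|) ^ 2 * (((σ + 1) ^ 2 + ‖b‖ ^ 2) * (1 + |s.im|) ^ 2)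
          / ‖a ^ 2 * b ^ 2‖ * (C * Real.exp (-|s.im|)) := by
        gcongr
        exacts [norm_sq_sub_sq_le hs a, norm_sq_sub_sq_le hs b]
    _ = ((σ + 1) ^ 2 + ‖a‖ ^ 2) * ((σ + 1) ^ 2 + ‖b‖ ^ 2) / ‖a ^ 2 * b ^ 2‖ * C
          * ((1 + |s.im|) ^ 4 * Real.exp (-|s.im|)) := by ring
    _ ≤ _ := by
      rw [mul_assoc _ (6 ^ 6 : ℝ)]
      exact mul_le_mul_of_nonneg_left (one_add_abs_pow_four_mul_exp_neg_le s.im)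
        (mul_nonneg (by positivity) hC)

theorem stmt4_general (σ : ℝ) (hσ : 0 < σ) (f : ℂ → ℂ)
    (hf : DifferentiableOn ℂ f {s : ℂ | |s.re| ≤ σ})
    (hdecay : ∃ C : ℝ, ∀ s : ℂ, |s.re| ≤ σ → ‖f s‖ ≤ C * Real.exp (-|s.im|))
    (a b : ℂ) (ha : a ≠ 0) (hb : b ≠ 0)
    (hsym : ∀ s : ℂ, f (-s) = f s) :
    (1 / (2 * Real.pi * I)) *
      ∫ t : ℝ, ((((σ : ℂ) + t * I) ^ 2 - a ^ 2) * (((σ : ℂ) + t * I) ^ 2 - b ^ 2) /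
          (a ^ 2 * b ^ 2)) * f ((σ : ℂ) + t * I) / ((σ : ℂ) + t * I) * I
    = f 0 / 2 := by
  obtain ⟨C, hC⟩ := hdecay
  have hg : Differentiable ℂ fun s : ℂ => (s ^ 2 - a ^ 2) * (s ^ 2 - b ^ 2) / (a ^ 2 * b ^ 2) := by
    fun_prop
  have hg0 : ((0 : ℂ) ^ 2 - a ^ 2) * ((0 : ℂ) ^ 2 - b ^ 2) / (a ^ 2 * b ^ 2) = 1 := by
    field_simp
    ring
  rw [integral_vertical_div_of_even_of_norm_le hσ
    (φ := fun s => (s ^ 2 - a ^ 2) * (s ^ 2 - b ^ 2) / (a ^ 2 * b ^ 2) * f s)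
    (hg.differentiableOn.mul hf)
    (fun s => by simp only [neg_sq, hsym s]) fun s hs => norm_quartic_mul_le a b hs (hC s hs)]
  rw [hg0, one_mul]
  field_simp

theorem stmt4 (σ : ℝ) (hσ : 0 < σ) (f : ℂ → ℂ)
    (hf : DifferentiableOn ℂ f {s : ℂ | |s.re| ≤ σ})
    (hdecay : ∃ C : ℝ, ∀ s : ℂ, |s.re| ≤ σ → ‖f s‖ ≤ C * Real.exp (-|s.im|))
    (a b : ℂ) (ha : a ≠ 0) (hb : b ≠ 0) (hra : |a.re| < σ) (hrb : |b.re| < σ)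
    (hsym : ∀ s : ℂ, f (-s) = f s) :
    (1 / (2 * Real.pi * I)) *
      ∫ t : ℝ, ((((σ : ℂ) + t * I) ^ 2 - a ^ 2) * (((σ : ℂ) + t * I) ^ 2 - b ^ 2) /
          (a ^ 2 * b ^ 2)) * f ((σ : ℂ) + t * I) / ((σ : ℂ) + t * I) * I
    = f 0 / 2 :=
  stmt4_general σ hσ f hf hdecay a b ha hb hsym
end

section
/- For any positive integer l that is not a perfect square and any integer n with 1 ≤ n ≤ ⌊2√l⌋, one has arccos(n/(2√l)) ≥ 2·arcsin(√({2√l}/(4√l))) ≥ √({2√l}/(4√l)) ≥ 1/(2⌊2√l⌋), so that arccos(n/(2√l)) ≫ 1/√l. -/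
open Real

lemma my_arccos_anti {x y : ℝ} (h : x ≤ y) : Real.arccos y ≤ Real.arccos x := by
  simp only [Real.arccos]
  linarith [Real.monotone_arcsin h]

set_option maxHeartbeats 1000000 in
theorem stmt6 (l : ℕ) (hl : 0 < l) (hns : ¬ ∃ r : ℕ, l = r ^ 2)
    (n : ℕ) (hn1 : 1 ≤ n) (hn2 : n ≤ ⌊2 * Real.sqrt l⌋₊) :
    Real.arccos (n / (2 * Real.sqrt l))
      ≥ 2 * Real.arcsin (Real.sqrt (Int.fract (2 * Real.sqrt l) / (4 * Real.sqrt l))) ∧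
    2 * Real.arcsin (Real.sqrt (Int.fract (2 * Real.sqrt l) / (4 * Real.sqrt l)))
      ≥ Real.sqrt (Int.fract (2 * Real.sqrt l) / (4 * Real.sqrt l)) ∧
    Real.sqrt (Int.fract (2 * Real.sqrt l) / (4 * Real.sqrt l))
      ≥ 1 / (2 * (⌊2 * Real.sqrt l⌋₊ : ℝ)) ∧
    Real.arccos (n / (2 * Real.sqrt l)) ≥ 1 / (4 * Real.sqrt l) := by
  set t : ℝ := 2 * Real.sqrt l with ht
  have hsl : (0:ℝ) < Real.sqrt l := Real.sqrt_pos.2 (by exact_mod_cast hl)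
  have hsl1 : (1:ℝ) ≤ Real.sqrt l := by
    rw [show (1:ℝ) = Real.sqrt 1 by simp]
    exact Real.sqrt_le_sqrt (by exact_mod_cast hl)
  have ht0 : (0:ℝ) < t := by rw [ht]; positivity
  have ht2 : (2:ℝ) ≤ t := by rw [ht]; linarith
  have htsq : t ^ 2 = 4 * l := by
    rw [ht, mul_pow, Real.sq_sqrt (by positivity : (0:ℝ) ≤ (l:ℝ))]; ring
  set m : ℕ := ⌊t⌋₊ with hm
  have hm1 : 1 ≤ m := Nat.le_floor (by push_cast; linarith)
  have hmt : (m:ℝ) ≤ t := Nat.floor_le ht0.le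
  have htm1 : t < (m:ℝ) + 1 := Nat.lt_floor_add_one t
  have hm2le : m ^ 2 ≤ 4 * l := by
    have : ((m:ℝ)) ^ 2 ≤ (4:ℝ) * l := by nlinarith
    exact_mod_cast this
  have hkey : m ^ 2 + 3 ≤ 4 * l := by
    rcases Nat.even_or_odd m with ⟨a, ha⟩ | ⟨a, ha⟩
    · have hne : l ≠ a ^ 2 := fun h => hns ⟨a, h⟩
      have hm2 : m ^ 2 = 4 * a ^ 2 := by rw [ha]; ring
      have h1 : a ^ 2 ≤ l := by
        have h' : 4 * a ^ 2 ≤ 4 * l := hm2 ▸ hm2le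
        omega
      have h2 : a ^ 2 < l := lt_of_le_of_ne h1 (Ne.symm hne)
      omega
    · have hm2 : m ^ 2 = 4 * (a ^ 2 + a) + 1 := by rw [ha]; ring
      have h1 : a ^ 2 + a < l := by
        have h' : 4 * (a ^ 2 + a) + 1 ≤ 4 * l := hm2 ▸ hm2le
        omega
      omega
  have hkeyR : ((m:ℝ)) ^ 2 + 3 ≤ 4 * (l:ℝ) := by exact_mod_cast hkey
  have hdiff : (3:ℝ) ≤ t ^ 2 - (m:ℝ) ^ 2 := by rw [htsq]; linarith
  have hmtlt : (m:ℝ) < t := by nlinarith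
  have hfr : Int.fract t = t - m := by
    rw [Int.fract, ← Int.natCast_floor_eq_floor ht0.le]
    push_cast [hm]
    ring_nf
  have h4s : 4 * Real.sqrt l = 2 * t := by rw [ht]; ring
  set f : ℝ := Int.fract t / (4 * Real.sqrt l) with hf
  have hfval : f = (t - m) / (2 * t) := by rw [hf, hfr, h4s]
  have hf0 : 0 < f := by
    rw [hfval]
    apply div_pos (by linarith) (by linarith)
  have hflt : f < 1 / 4 := by
    rw [hfval, div_lt_div_iff₀ (by linarith) (by norm_num)]
    nlinarith
  clear_value t m f
  have hsf0 : 0 ≤ Real.sqrt f := Real.sqrt_nonneg f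
  have hsf1 : Real.sqrt f ≤ 1 := by
    rw [show (1:ℝ) = Real.sqrt 1 by simp]
    exact Real.sqrt_le_sqrt (by linarith)
  have hsin : Real.sin (Real.arcsin (Real.sqrt f)) = Real.sqrt f :=
    Real.sin_arcsin (by linarith) hsf1
  have harcsin_nonneg : 0 ≤ Real.arcsin (Real.sqrt f) := Real.arcsin_nonneg.2 hsf0
  have harcsin_le : Real.arcsin (Real.sqrt f) ≤ π / 2 := Real.arcsin_le_pi_div_two _
  have hcos : Real.cos (2 * Real.arcsin (Real.sqrt f)) = 1 - 2 * f := by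
    rw [Real.cos_two_mul', ← Real.sin_sq_add_cos_sq (Real.arcsin (Real.sqrt f))]
    rw [hsin, Real.sq_sqrt hf0.le]
    ring
  have hid : Real.arccos (1 - 2 * f) = 2 * Real.arcsin (Real.sqrt f) := by
    rw [← hcos, Real.arccos_cos (by linarith) (by linarith)]
  have hnm : (n:ℝ) ≤ (m:ℝ) := by exact_mod_cast hn2
  have h1 : Real.arccos ((n:ℝ) / t) ≥ 2 * Real.arcsin (Real.sqrt f) := by
    rw [← hid]
    have hle2 : (n:ℝ) / t ≤ 1 - 2 * f := by
      have e : 1 - 2 * f = (m:ℝ) / t := by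
        rw [hfval]; field_simp; ring
      rw [e]
      gcongr
    exact my_arccos_anti hle2
  have h2 : 2 * Real.arcsin (Real.sqrt f) ≥ Real.sqrt f := by
    have : Real.sqrt f ≤ Real.arcsin (Real.sqrt f) := by
      calc Real.sqrt f = Real.sin (Real.arcsin (Real.sqrt f)) := hsin.symm
        _ ≤ Real.arcsin (Real.sqrt f) := Real.sin_le harcsin_nonneg
    linarith
  have hm0R : (1:ℝ) ≤ (m:ℝ) := by exact_mod_cast hm1
  have h3 : Real.sqrt f ≥ 1 / (2 * (m:ℝ)) := by
    rw [ge_iff_le, Real.le_sqrt (by positivity) hf0.le, hfval]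
    rw [div_pow, one_pow, div_le_div_iff₀ (by positivity) (by linarith)]
    -- goal: 1 * (2 * t) ≤ (t - m) * (2 * m) ^ 2
    have hstep : 2 * t * (t + (m:ℝ)) ≤ 4 * (m:ℝ)^2 * (t^2 - (m:ℝ)^2) := by
      nlinarith [hdiff, sq_nonneg ((m:ℝ) - 1), sq_nonneg (t - m)]
    have hcancel : 2 * t ≤ (t - (m:ℝ)) * (2 * (m:ℝ)) ^ 2 := by
      have h' : 2 * t * (t + (m:ℝ)) ≤ ((t - (m:ℝ)) * (2 * (m:ℝ)) ^ 2) * (t + (m:ℝ)) := by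
        nlinarith [hstep]
      exact le_of_mul_le_mul_right h' (by linarith)
    linarith
  have h4 : Real.arccos ((n:ℝ) / t) ≥ 1 / (4 * Real.sqrt l) := by
    rw [h4s]
    have hle : 1 / (2 * t) ≤ 1 / (2 * (m:ℝ)) := by
      apply one_div_le_one_div_of_le (by linarith)
      linarith
    have hle2 : 1 / (2 * (m:ℝ)) ≤ Real.sqrt f := h3
    linarith
  exact ⟨h1, h2, h3, h4⟩
end
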